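/- arXiv:1401.7904 — 6 statements merged into one kernel-verified Lean document; each statement's English description precedes it below -/
import Mathlib

section
/- Let L_d^E(q, q̄) = ∫_0^h L(q_E(t), q̇_E(t)) dt be the exact discrete Lagrangian, where q_E is the solution of M(q)q̇ = ∇H(q) with q_E(0) = q (so q̄ = q_E(h)), and let L_d(q, q̄) = h·L((q+q̄)/2, (q̄−q)/h) be the midpoint-rule discrete Lagrangian. Then the midpoint rule is of order 2: for every open set U ⊂ ℝ^n with compact closure there exist constants C > 0 and h̄ > 0 such that |L_d(q(0), q(h)) − L_d^E(q(0), q(h))| ≤ C h³ for every solution q(t) of M(q)q̇ = ∇H(q) with q(0) ∈ U and every 0 < h ≤ h̄. -/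
open Matrix

/-- The Jacobian matrix `(Dα)_{μν} = ∂α_μ/∂q^ν` of a map `α : ℝ^n → ℝ^n`. -/
noncomputable def jac {n : ℕ} (f : (Fin n → ℝ) → (Fin n → ℝ)) (q : Fin n → ℝ) :
    Matrix (Fin n) (Fin n) ℝ :=
  fun μ ν => fderiv ℝ f q (Pi.single ν 1) μ

/-- The gradient `∇H` of a function `H : ℝ^n → ℝ`. -/
noncomputable def grad {n : ℕ} (H : (Fin n → ℝ) → ℝ) (q : Fin n → ℝ) : Fin n → ℝ :=
  fun μ => fderiv ℝ H q (Pi.single μ 1)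

/-- The antisymmetric matrix `M(q) = Dα(q)ᵀ − Dα(q)`. -/
noncomputable def Mmat {n : ℕ} (α : (Fin n → ℝ) → (Fin n → ℝ)) (q : Fin n → ℝ) :
    Matrix (Fin n) (Fin n) ℝ :=
  (jac α q)ᵀ - jac α q

/-!
Write `c(t) = φ t q`, `μ = c(h/2)` and `w = ċ(h/2)`. The action integral `∫₀ʰ L(c, ċ)` differs
from `h L(μ, w)` by the error of the midpoint quadrature rule, which is `O(h³)` because the
integrand has a bounded second derivative. Expanding `c` about `h/2`, the odd-order terms cancel
in `(c(0) + c(h))/2 − μ` and in `(c(h) − c(0))/h − w`, so both are `O(h²)`; as `L` is locally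
Lipschitz, `h L((c(0) + c(h))/2, (c(h) − c(0))/h)` differs from `h L(μ, w)` by `h · O(h²)`.
All constants are uniform in `q` because the time derivatives of `(t, q) ↦ φ t q` are bounded on
the compact set `[0, 1] × closure U`.
-/

open Set NNReal

section Taylor

variable {E : Type*} [NormedAddCommGroup E] [NormedSpace ℝ E] {f f' f'' : ℝ → E} {a b K : ℝ}

theorem norm_sub_sub_smul_le_of_hasDerivAt (hf : ∀ t, HasDerivAt f (f' t) t)
    (hf' : ∀ t, HasDerivAt f' (f'' t) t) (hK : ∀ t ∈ uIcc a b, ‖f'' t‖ ≤ K) :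
    ‖f b - f a - (b - a) • f' a‖ ≤ K * (b - a) ^ 2 := by
  have hK0 : 0 ≤ K := (norm_nonneg _).trans (hK a left_mem_uIcc)
  have hf'_lip : ∀ t ∈ uIcc a b, ‖f' t - f' a‖ ≤ K * |b - a| := fun t ht =>
    calc ‖f' t - f' a‖ ≤ K * ‖t - a‖ :=
          (convex_uIcc a b).norm_image_sub_le_of_norm_hasDerivWithin_le
            (fun s _ => (hf' s).hasDerivWithinAt) hK left_mem_uIcc ht
      _ ≤ K * |b - a| := mul_le_mul_of_nonneg_left (abs_sub_left_of_mem_uIcc ht) hK0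
  have hg : ∀ t, HasDerivAt (fun s => f s - (s - a) • f' a) (f' t - f' a) t := fun t => by
    have := (hf t).sub (((hasDerivAt_id t).sub_const a).smul_const (f' a))
    rwa [one_smul] at this
  have := (convex_uIcc a b).norm_image_sub_le_of_norm_hasDerivWithin_le
    (fun s _ => (hg s).hasDerivWithinAt) hf'_lip left_mem_uIcc right_mem_uIcc
  simpa [sub_right_comm, mul_assoc, ← sq] using this

theorem norm_smul_add_sub_midpoint_le (hf : ∀ t, HasDerivAt f (f' t) t)
    (hf' : ∀ t, HasDerivAt f' (f'' t) t) (hab : a ≤ b) (hK : ∀ t ∈ Icc a b, ‖f'' t‖ ≤ K) :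
    ‖(1 / 2 : ℝ) • (f a + f b) - f ((a + b) / 2)‖ ≤ K * (b - a) ^ 2 / 4 := by
  set m := (a + b) / 2 with hm
  have hm_mem : m ∈ Icc a b := ⟨by linarith, by linarith⟩
  have hK' : ∀ x ∈ Icc a b, ∀ t ∈ uIcc m x, ‖f'' t‖ ≤ K := fun x hx t ht =>
    hK t (uIcc_subset_Icc hm_mem hx ht)
  have ha := norm_sub_sub_smul_le_of_hasDerivAt hf hf' (hK' a (left_mem_Icc.2 hab))
  have hb := norm_sub_sub_smul_le_of_hasDerivAt hf hf' (hK' b (right_mem_Icc.2 hab))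
  calc ‖(1 / 2 : ℝ) • (f a + f b) - f m‖
      = (1 / 2) * ‖(f a - f m - (a - m) • f' m) + (f b - f m - (b - m) • f' m)‖ := by
        rw [← norm_smul_of_nonneg (by norm_num)]
        congr 1
        rw [hm]
        module
    _ ≤ (1 / 2) * (K * (a - m) ^ 2 + K * (b - m) ^ 2) := by
        gcongr; exact (norm_add_le _ _).trans (add_le_add ha hb)
    _ = K * (b - a) ^ 2 / 4 := by rw [hm]; ring

theorem norm_integral_sub_midpoint_le [CompleteSpace E] (hf : ∀ t, HasDerivAt f (f' t) t)
    (hf' : ∀ t, HasDerivAt f' (f'' t) t) (hab : a ≤ b) (hK : ∀ t ∈ Icc a b, ‖f'' t‖ ≤ K) :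
    ‖(∫ t in a..b, f t) - (b - a) • f ((a + b) / 2)‖ ≤ K * (b - a) ^ 3 / 4 := by
  set m := (a + b) / 2 with hm
  have hm_mem : m ∈ Icc a b := ⟨by linarith, by linarith⟩
  have hf_cont : Continuous f := continuous_iff_continuousAt.2 fun t => (hf t).continuousAt
  have hmean : ∫ t in a..b, (t - m) = 0 := by
    rw [intervalIntegral.integral_comp_sub_right (fun t => t), integral_id]
    rw [hm]; ring
  have hsplit : (∫ t in a..b, f t) - (b - a) • f m
      = ∫ t in a..b, (f t - f m - (t - m) • f' m) := by
    rw [intervalIntegral.integral_sub (f := fun t => f t - f m)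
        ((hf_cont.sub continuous_const).intervalIntegrable _ _)
        ((by fun_prop : Continuous fun t : ℝ => (t - m) • f' m).intervalIntegrable _ _),
      intervalIntegral.integral_sub (hf_cont.intervalIntegrable _ _) intervalIntegrable_const,
      intervalIntegral.integral_smul_const, hmean, intervalIntegral.integral_const]
    simp
  have hpoint : ∀ t ∈ uIoc a b, ‖f t - f m - (t - m) • f' m‖ ≤ K * (b - a) ^ 2 / 4 := by
    intro t ht
    rw [uIoc_of_le hab] at ht
    have hsub : uIcc m t ⊆ Icc a b := uIcc_subset_Icc hm_mem (Ioc_subset_Icc_self ht)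
    calc ‖f t - f m - (t - m) • f' m‖ ≤ K * (t - m) ^ 2 :=
          norm_sub_sub_smul_le_of_hasDerivAt hf hf' fun s hs => hK s (hsub hs)
      _ ≤ K * ((b - a) / 2) ^ 2 := by
          have hK0 : 0 ≤ K := (norm_nonneg _).trans (hK a (left_mem_Icc.2 hab))
          exact mul_le_mul_of_nonneg_left
            (sq_le_sq' (by linarith [ht.1]) (by linarith [ht.2])) hK0
      _ = K * (b - a) ^ 2 / 4 := by ring
  rw [hsplit]
  calc _ ≤ K * (b - a) ^ 2 / 4 * |b - a| :=
        intervalIntegral.norm_integral_le_of_norm_le_const hpoint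
    _ = K * (b - a) ^ 3 / 4 := by rw [abs_of_nonneg (sub_nonneg.2 hab)]; ring

end Taylor

section TimeDeriv

variable {P F : Type*} [NormedAddCommGroup P] [NormedSpace ℝ P]
  [NormedAddCommGroup F] [NormedSpace ℝ F] {G : ℝ × P → F}

noncomputable def timeDeriv (G : ℝ × P → F) : ℝ × P → F :=
  fun p => fderiv ℝ G p (1, 0)

theorem ContDiff.timeDeriv {k : WithTop ℕ∞} (hG : ContDiff ℝ (k + 1) G) :
    ContDiff ℝ k (timeDeriv G) :=
  (ContinuousLinearMap.apply ℝ F ((1 : ℝ), (0 : P))).contDiff.comp (hG.fderiv_right le_rfl)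

theorem Differentiable.hasDerivAt_timeDeriv (hG : Differentiable ℝ G) (q : P) (t : ℝ) :
    HasDerivAt (fun s => G (s, q)) (timeDeriv G (t, q)) t := by
  have := (hG (t, q)).hasFDerivAt.comp_hasDerivAt t
    ((hasDerivAt_id t).prodMk (hasDerivAt_const t q))
  simpa [timeDeriv, Function.comp_def] using this

end TimeDeriv

section Lagrangian

variable {n : ℕ}

theorem abs_dotProduct_le (a b : Fin n → ℝ) : |a ⬝ᵥ b| ≤ n * (‖a‖ * ‖b‖) :=
  calc |a ⬝ᵥ b| ≤ ∑ i, |a i * b i| := Finset.abs_sum_le_sum_abs _ _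
    _ ≤ ∑ _i : Fin n, ‖a‖ * ‖b‖ := Finset.sum_le_sum fun i _ => by
        rw [abs_mul]
        exact mul_le_mul (norm_le_pi_norm a i) (norm_le_pi_norm b i) (abs_nonneg _) (norm_nonneg _)
    _ = n * (‖a‖ * ‖b‖) := by simp

theorem ContDiff.dotProduct {E : Type*} [NormedAddCommGroup E] [NormedSpace ℝ E]
    {k : WithTop ℕ∞} {f g : E → Fin n → ℝ} (hf : ContDiff ℝ k f) (hg : ContDiff ℝ k g) :
    ContDiff ℝ k fun x => f x ⬝ᵥ g x :=
  ContDiff.sum fun i _ => (contDiff_pi.1 hf i).mul (contDiff_pi.1 hg i)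

def lagrangian (α : (Fin n → ℝ) → Fin n → ℝ) (H : (Fin n → ℝ) → ℝ) (q v : Fin n → ℝ) : ℝ :=
  α q ⬝ᵥ v - H q

variable {α : (Fin n → ℝ) → Fin n → ℝ} {H : (Fin n → ℝ) → ℝ}

theorem abs_lagrangian_sub_le {V : Set (Fin n → ℝ)} {Lα LH : ℝ≥0} {Mα : ℝ}
    (hα : LipschitzOnWith Lα α V) (hH : LipschitzOnWith LH H V) {x y : Fin n → ℝ}
    (hx : x ∈ V) (hy : y ∈ V) (hαy : ‖α y‖ ≤ Mα) (v w : Fin n → ℝ) :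
    |lagrangian α H x v - lagrangian α H y w|
      ≤ n * (Lα * ‖x - y‖ * ‖v‖) + n * (Mα * ‖v - w‖) + LH * ‖x - y‖ := by
  have hsplit : lagrangian α H x v - lagrangian α H y w
      = (α x - α y) ⬝ᵥ v + α y ⬝ᵥ (v - w) - (H x - H y) := by
    simp only [lagrangian, sub_dotProduct, dotProduct_sub]; ring
  have hαxy : ‖α x - α y‖ ≤ Lα * ‖x - y‖ := hα.norm_sub_le hx hy
  have hHxy : |H x - H y| ≤ LH * ‖x - y‖ := hH.norm_sub_le hx hy
  rw [hsplit]
  calc _ ≤ |(α x - α y) ⬝ᵥ v| + |α y ⬝ᵥ (v - w)| + |H x - H y| :=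
        (abs_sub _ _).trans (add_le_add_left (abs_add_le _ _) _)
    _ ≤ _ := by
      gcongr
      · exact (abs_dotProduct_le _ _).trans (by gcongr)
      · exact (abs_dotProduct_le _ _).trans (by gcongr)

theorem abs_midpoint_action_error_le {c c₁ c₂ c₃ : ℝ → Fin n → ℝ} {g₁ g₂ : ℝ → ℝ}
    (hc : ∀ t, HasDerivAt c (c₁ t) t) (hc₁ : ∀ t, HasDerivAt c₁ (c₂ t) t)
    (hc₂ : ∀ t, HasDerivAt c₂ (c₃ t) t)
    (hg : ∀ t, HasDerivAt (fun s => lagrangian α H (c s) (c₁ s)) (g₁ t) t)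
    (hg₁ : ∀ t, HasDerivAt g₁ (g₂ t) t)
    {V : Set (Fin n → ℝ)} {Lα LH : ℝ≥0} {Mα K₁ K₂ K₃ Kg h : ℝ} (hh : 0 < h)
    (hV : Convex ℝ V) (hcV : ∀ t ∈ Icc 0 h, c t ∈ V)
    (hα : LipschitzOnWith Lα α V) (hH : LipschitzOnWith LH H V) (hαM : ∀ x ∈ V, ‖α x‖ ≤ Mα)
    (hK₁ : ∀ t ∈ Icc 0 h, ‖c₁ t‖ ≤ K₁) (hK₂ : ∀ t ∈ Icc 0 h, ‖c₂ t‖ ≤ K₂)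
    (hK₃ : ∀ t ∈ Icc 0 h, ‖c₃ t‖ ≤ K₃) (hKg : ∀ t ∈ Icc 0 h, ‖g₂ t‖ ≤ Kg) :
    |h * lagrangian α H ((1 / 2 : ℝ) • (c 0 + c h)) ((1 / h) • (c h - c 0))
        - ∫ t in (0 : ℝ)..h, lagrangian α H (c t) (c₁ t)|
      ≤ (n * Lα * K₂ * K₁ + n * Mα * K₃ + LH * K₂ + Kg) / 4 * h ^ 3 := by
  set m := (1 / 2 : ℝ) • (c 0 + c h)
  set v := (1 / h) • (c h - c 0)
  have hmid : h / 2 ∈ Icc 0 h := ⟨by linarith, by linarith⟩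
  have hv : ‖v‖ ≤ K₁ := by
    have := (convex_Icc 0 h).norm_image_sub_le_of_norm_hasDerivWithin_le
      (fun t _ => (hc t).hasDerivWithinAt) hK₁ (left_mem_Icc.2 hh.le) (right_mem_Icc.2 hh.le)
    rw [norm_smul, Real.norm_of_nonneg (by positivity), div_mul_eq_mul_div, one_mul,
      div_le_iff₀ hh]
    simpa [abs_of_pos hh] using this
  have hm : ‖m - c (h / 2)‖ ≤ K₂ * h ^ 2 / 4 := by
    have := norm_smul_add_sub_midpoint_le hc hc₁ hh.le hK₂
    rwa [zero_add, sub_zero] at this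
  have hvw : ‖v - c₁ (h / 2)‖ ≤ K₃ * h ^ 2 / 4 := by
    have := norm_integral_sub_midpoint_le hc₁ hc₂ hh.le hK₃
    rw [intervalIntegral.integral_eq_sub_of_hasDerivAt (fun t _ => hc t)
      ((continuous_iff_continuousAt.2 fun t => (hc₁ t).continuousAt).intervalIntegrable _ _)]
      at this
    have hscale : v - c₁ (h / 2) = (1 / h) • (c h - c 0 - h • c₁ (h / 2)) := by
      rw [smul_sub, smul_smul, one_div_mul_cancel hh.ne', one_smul]
    rw [hscale, norm_smul, Real.norm_of_nonneg (by positivity), div_mul_eq_mul_div, one_mul,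
      div_le_iff₀ hh]
    calc _ ≤ K₃ * h ^ 3 / 4 := by simpa using this
      _ = _ := by ring
  have hquad : |(∫ t in (0 : ℝ)..h, lagrangian α H (c t) (c₁ t))
      - h * lagrangian α H (c (h / 2)) (c₁ (h / 2))| ≤ Kg * h ^ 3 / 4 := by
    simpa using norm_integral_sub_midpoint_le hg hg₁ hh.le hKg
  have hmV : m ∈ V := by
    simpa [m, smul_add] using hV (hcV 0 (left_mem_Icc.2 hh.le)) (hcV h (right_mem_Icc.2 hh.le))
      (by norm_num : (0 : ℝ) ≤ 1 / 2) (by norm_num : (0 : ℝ) ≤ 1 / 2) (by norm_num)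
  have hL := abs_lagrangian_sub_le hα hH hmV (hcV _ hmid) (hαM _ (hcV _ hmid)) v (c₁ (h / 2))
  calc _ ≤ |h * lagrangian α H m v - h * lagrangian α H (c (h / 2)) (c₁ (h / 2))|
        + |h * lagrangian α H (c (h / 2)) (c₁ (h / 2))
          - ∫ t in (0 : ℝ)..h, lagrangian α H (c t) (c₁ t)| := abs_sub_le _ _ _
    _ = h * |lagrangian α H m v - lagrangian α H (c (h / 2)) (c₁ (h / 2))|
        + |(∫ t in (0 : ℝ)..h, lagrangian α H (c t) (c₁ t))
          - h * lagrangian α H (c (h / 2)) (c₁ (h / 2))| := by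
        rw [← mul_sub, abs_mul, abs_of_pos hh, abs_sub_comm (h * _)]
    _ ≤ h * (n * (Lα * (K₂ * h ^ 2 / 4) * K₁) + n * (Mα * (K₃ * h ^ 2 / 4))
          + LH * (K₂ * h ^ 2 / 4)) + Kg * h ^ 3 / 4 := by
        have hm₀ : 0 ≤ K₂ * h ^ 2 / 4 := (norm_nonneg _).trans hm
        have hMα₀ : 0 ≤ Mα := (norm_nonneg _).trans (hαM _ hmV)
        gcongr
        exact hL.trans (by gcongr)
    _ = _ := by ring

theorem exists_abs_midpoint_action_error_le (hα : ContDiff ℝ 2 α) (hH : ContDiff ℝ 2 H)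
    {φ : ℝ → (Fin n → ℝ) → Fin n → ℝ}
    (hφ : ContDiff ℝ 3 fun p : ℝ × (Fin n → ℝ) => φ p.1 p.2)
    {K : Set (Fin n → ℝ)} (hK : IsCompact K) :
    ∃ C, ∀ q ∈ K, ∀ h : ℝ, 0 < h → h ≤ 1 →
      |h * lagrangian α H ((1 / 2 : ℝ) • (φ 0 q + φ h q)) ((1 / h) • (φ h q - φ 0 q))
        - ∫ t in (0 : ℝ)..h, lagrangian α H (φ t q) (deriv (fun s => φ s q) t)| ≤ C * h ^ 3 := by
  set Φ : ℝ × (Fin n → ℝ) → Fin n → ℝ := fun p => φ p.1 p.2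
  have hΦ₁ : ContDiff ℝ 2 (timeDeriv Φ) := ContDiff.timeDeriv (k := 2) hφ
  have hΦ₂ : ContDiff ℝ 1 (timeDeriv (timeDeriv Φ)) := ContDiff.timeDeriv (k := 1) hΦ₁
  have hΦ₃ : ContDiff ℝ 0 (timeDeriv (timeDeriv (timeDeriv Φ))) :=
    ContDiff.timeDeriv (k := 0) hΦ₂
  set G : ℝ × (Fin n → ℝ) → ℝ := fun p => lagrangian α H (Φ p) (timeDeriv Φ p)
  have hG : ContDiff ℝ 2 G := ((hα.comp (hφ.of_le (by norm_num))).dotProduct hΦ₁).sub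
    (hH.comp (hφ.of_le (by norm_num)))
  have hG₁ : ContDiff ℝ 1 (timeDeriv G) := ContDiff.timeDeriv (k := 1) hG
  have hG₂ : ContDiff ℝ 0 (timeDeriv (timeDeriv G)) := ContDiff.timeDeriv (k := 0) hG₁
  have hT := isCompact_Icc (a := (0 : ℝ)) (b := 1) |>.prod hK
  obtain ⟨R, hR⟩ := hT.exists_bound_of_continuousOn hφ.continuous.continuousOn
  obtain ⟨K₁, hK₁⟩ := hT.exists_bound_of_continuousOn hΦ₁.continuous.continuousOn
  obtain ⟨K₂, hK₂⟩ := hT.exists_bound_of_continuousOn hΦ₂.continuous.continuousOn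
  obtain ⟨K₃, hK₃⟩ := hT.exists_bound_of_continuousOn hΦ₃.continuous.continuousOn
  obtain ⟨Kg, hKg⟩ := hT.exists_bound_of_continuousOn hG₂.continuous.continuousOn
  -- Lipschitz bounds on a convex set, because `(φ 0 q + φ h q) / 2` is off the trajectory.
  obtain ⟨Lα, hLα⟩ := hα.contDiffOn.exists_lipschitzOnWith (by norm_num)
    (convex_closedBall 0 R) (isCompact_closedBall 0 R)
  obtain ⟨LH, hLH⟩ := hH.contDiffOn.exists_lipschitzOnWith (by norm_num)
    (convex_closedBall 0 R) (isCompact_closedBall 0 R)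
  obtain ⟨Mα, hMα⟩ := (isCompact_closedBall (0 : Fin n → ℝ) R).exists_bound_of_continuousOn
    hα.continuous.continuousOn
  refine ⟨(n * Lα * K₂ * K₁ + n * Mα * K₃ + LH * K₂ + Kg) / 4, fun q hq h hh h1 => ?_⟩
  have hmem : ∀ t ∈ Icc 0 h, (t, q) ∈ Icc 0 1 ×ˢ K := fun t ht => ⟨⟨ht.1, ht.2.trans h1⟩, hq⟩
  have hc := (hφ.differentiable (by norm_num)).hasDerivAt_timeDeriv q
  have hderiv : ∀ t, deriv (fun s => φ s q) t = timeDeriv Φ (t, q) := fun t => (hc t).deriv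
  simp only [hderiv]
  exact abs_midpoint_action_error_le hc
    ((hΦ₁.differentiable (by norm_num)).hasDerivAt_timeDeriv q)
    ((hΦ₂.differentiable (by norm_num)).hasDerivAt_timeDeriv q)
    ((hG.differentiable (by norm_num)).hasDerivAt_timeDeriv q)
    ((hG₁.differentiable (by norm_num)).hasDerivAt_timeDeriv q) hh (convex_closedBall 0 R)
    (fun t ht => mem_closedBall_zero_iff.2 (hR _ (hmem t ht))) hLα hLH hMα
    (fun t ht => hK₁ _ (hmem t ht)) (fun t ht => hK₂ _ (hmem t ht))
    (fun t ht => hK₃ _ (hmem t ht)) (fun t ht => hKg _ (hmem t ht))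

end Lagrangian

theorem midpoint_rule_is_order_two_general
    {n : ℕ}
    (α : (Fin n → ℝ) → (Fin n → ℝ)) (H : (Fin n → ℝ) → ℝ)
    (hα : ContDiff ℝ (⊤ : ℕ∞) α) (hH : ContDiff ℝ (⊤ : ℕ∞) H)
    (φ : ℝ → (Fin n → ℝ) → (Fin n → ℝ))
    (hφ0 : ∀ q, φ 0 q = q)
    (hφsmooth : ContDiff ℝ (⊤ : ℕ∞) (fun p : ℝ × (Fin n → ℝ) => φ p.1 p.2))
    (U : Set (Fin n → ℝ)) (hUc : IsCompact (closure U)) :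
    ∃ C > (0:ℝ), ∃ hbar > (0:ℝ), ∀ q ∈ U, ∀ h : ℝ, 0 < h → h ≤ hbar →
      |h * (α (((1:ℝ)/2) • (q + φ h q)) ⬝ᵥ (((1:ℝ)/h) • (φ h q - q))
            - H (((1:ℝ)/2) • (q + φ h q)))
        - ∫ t in (0:ℝ)..h,
            (α (φ t q) ⬝ᵥ deriv (fun s => φ s q) t - H (φ t q))| ≤ C * h ^ 3 := by
  obtain ⟨C, hC⟩ := exists_abs_midpoint_action_error_le (contDiff_infty.1 hα 2)
    (contDiff_infty.1 hH 2) (contDiff_infty.1 hφsmooth 3) hUc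
  refine ⟨max C 1, by positivity, 1, one_pos, fun q hq h hh h1 => ?_⟩
  have := hC q (subset_closure hq) h hh h1
  rw [hφ0] at this
  exact this.trans (by gcongr; exact le_max_left _ _)

/-- The midpoint-rule discrete Lagrangian `L_d(q,q̄) = h L((q+q̄)/2, (q̄−q)/h)` for the
Lagrangian `L(q,q̇) = α(q)·q̇ − H(q)` is of order 2: on every open set `U` with compact
closure there are `C > 0` and `h̄ > 0` such that
`|L_d(q(0),q(h)) − L_d^E(q(0),q(h))| ≤ C h³` for every solution `q(t) = φ_t(q(0))` of
`M(q)q̇ = ∇H(q)` with `q(0) ∈ U` and every `0 < h ≤ h̄`, where `L_d^E` is the exact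
discrete Lagrangian, i.e. the action integral along the exact solution. -/
theorem midpoint_rule_is_order_two
    {n : ℕ} (hn : Even n)
    (α : (Fin n → ℝ) → (Fin n → ℝ)) (H : (Fin n → ℝ) → ℝ)
    (hα : ContDiff ℝ (⊤ : ℕ∞) α) (hH : ContDiff ℝ (⊤ : ℕ∞) H)
    (hM : ∀ q : Fin n → ℝ, IsUnit (Mmat α q).det)
    (φ : ℝ → (Fin n → ℝ) → (Fin n → ℝ))
    (hφ0 : ∀ q, φ 0 q = q)
    (hφsmooth : ContDiff ℝ (⊤ : ℕ∞) (fun p : ℝ × (Fin n → ℝ) => φ p.1 p.2))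
    (hflow : ∀ (t : ℝ) (q : Fin n → ℝ),
      HasDerivAt (fun s => φ s q) ((Mmat α (φ t q))⁻¹ *ᵥ grad H (φ t q)) t)
    (U : Set (Fin n → ℝ)) (hU : IsOpen U) (hUc : IsCompact (closure U)) :
    ∃ C > (0:ℝ), ∃ hbar > (0:ℝ), ∀ q ∈ U, ∀ h : ℝ, 0 < h → h ≤ hbar →
      |h * (α (((1:ℝ)/2) • (q + φ h q)) ⬝ᵥ (((1:ℝ)/h) • (φ h q - q))
            - H (((1:ℝ)/2) • (q + φ h q)))
        - ∫ t in (0:ℝ)..h,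
            (α (φ t q) ⬝ᵥ deriv (fun s => φ s q) t - H (φ t q))| ≤ C * h ^ 3 :=
  midpoint_rule_is_order_two_general α H hα hH φ hφ0 hφsmooth U hUc
end

section
/- Fix Runge–Kutta coefficients a_{ij}, b_i (i,j = 1,…,s) with all b_i ≠ 0, and define ā_{ij} by the symplecticity condition b_i ā_{ij} + b_j a_{ji} = b_i b_j for all i,j. Consider the discrete Lagrangian L_d(q, q̄) = h Σ_{i=1}^s b_i L(Q_i, Q̇_i), where the internal stages satisfy Q_i = q + h Σ_j a_{ij} Q̇_j and are chosen to extremize this sum subject to the constraint q̄ = q + h Σ_i b_i Q̇_i. Then the variational integrator defined by the discrete Euler–Lagrange equations D₂L_d(q_{k−1}, q_k) + D₁L_d(q_k, q_{k+1}) = 0, with discrete momenta p_k = D₂L_d(q_{k−1}, q_k) = −D₁L_d(q_k, q_{k+1}), is equivalent to the partitioned Runge–Kutta method with coefficients (a_{ij}, ā_{ij}, b_i) applied to the 'Hamiltonian' differential-algebraic system p = α(q), ṗ = Dα(q)ᵀ q̇ − ∇H(q); namely the scheme: P_i = α(Q_i), Ṗ_i = Dα(Q_i)ᵀ Q̇_i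 − ∇H(Q_i), Q_i = q + h Σ_j a_{ij} Q̇_j, P_i = p + h Σ_j ā_{ij} Ṗ_j (i = 1,…,s), q̄ = q + h Σ_j b_j Q̇_j, p̄ = p + h Σ_j b_j Ṗ_j. -/
/-!
Varying an end point of `L_d`, the stage variations satisfy `δQᵢ = δq + h Σⱼ aᵢⱼ δQ̇ⱼ` and
`δq̄ - δq = h Σᵢ bᵢ δQ̇ᵢ`. Pairing the stationarity condition for `Q̇ⱼ` with `δQ̇ⱼ` and summing
over `j` cancels every term in the `δQ̇ⱼ`, leaving `δL_d = (h Σᵢ bᵢ Ṗᵢ) ⬝ δq + λ ⬝ (δq̄ - δq)`.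
Hence `p̄ = λ` and `p = λ - h Σᵢ bᵢ Ṗᵢ`, which is the momentum update. Dividing the `i`-th
stationarity condition by `h bᵢ` and replacing `bⱼ aⱼᵢ / bᵢ` by `bⱼ - āᵢⱼ` (symplecticity) turns
it into `Pᵢ = p + h Σⱼ āᵢⱼ Ṗⱼ`.
-/

open Matrix

section

variable {ι E : Type*} [Fintype ι] [NormedAddCommGroup E] [NormedSpace ℝ E] {n : ℕ}

theorem DifferentiableAt.dotProduct {f g : E → ι → ℝ} {x : E} (hf : DifferentiableAt ℝ f x)
    (hg : DifferentiableAt ℝ g x) : DifferentiableAt ℝ (fun y => f y ⬝ᵥ g y) x :=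
  .fun_sum fun i _ => (differentiableAt_pi.1 hf i).fun_mul (differentiableAt_pi.1 hg i)

theorem fderiv_dotProduct_apply {f g : E → ι → ℝ} {x : E} (hf : DifferentiableAt ℝ f x)
    (hg : DifferentiableAt ℝ g x) (v : E) :
    fderiv ℝ (fun y => f y ⬝ᵥ g y) x v = fderiv ℝ f x v ⬝ᵥ g x + f x ⬝ᵥ fderiv ℝ g x v := by
  have hfi := differentiableAt_pi.1 hf
  have hgi := differentiableAt_pi.1 hg
  simp only [dotProduct]
  rw [fderiv_fun_sum fun i _ => (hfi i).fun_mul (hgi i)]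
  simp [fderiv_fun_mul (hfi _) (hgi _), fderiv_apply hf, fderiv_apply hg, Finset.sum_add_distrib,
    mul_comm, add_comm]

theorem hasFDerivAt_add_smul_sum {F : Type*} [NormedAddCommGroup F] [NormedSpace ℝ F]
    {q₀ : E → F} {V : E → ι → F} {x : E} (hq₀ : DifferentiableAt ℝ q₀ x)
    (hV : ∀ j, DifferentiableAt ℝ (fun y => V y j) x) (h : ℝ) (c : ι → ℝ) :
    HasFDerivAt (fun y => q₀ y + h • ∑ j, c j • V y j)
      (fderiv ℝ q₀ x + h • ∑ j, c j • fderiv ℝ (fun y => V y j) x) x :=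
  hq₀.hasFDerivAt.add
    ((HasFDerivAt.fun_sum fun j _ => (hV j).hasFDerivAt.const_smul (c j)).const_smul h)

theorem jac_mulVec (f : (Fin n → ℝ) → (Fin n → ℝ)) (x w : Fin n → ℝ) :
    jac f x *ᵥ w = fderiv ℝ f x w := by
  have : jac f x = LinearMap.toMatrix' (fderiv ℝ f x).toLinearMap := by
    ext μ ν
    rfl
  rw [this, LinearMap.toMatrix'_mulVec]
  rfl

theorem grad_dotProduct (H : (Fin n → ℝ) → ℝ) (x w : Fin n → ℝ) :
    grad H x ⬝ᵥ w = fderiv ℝ H x w := by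
  conv_rhs => rw [← Finset.univ_sum_single w, map_sum]
  refine Finset.sum_congr rfl fun ν _ => ?_
  rw [grad, mul_comm, ← smul_eq_mul, ← map_smul, ← Pi.single_smul, smul_eq_mul, mul_one]

theorem grad_eq_of_fderiv_apply_eq {H : (Fin n → ℝ) → ℝ} {x w : Fin n → ℝ}
    (hH : ∀ v, fderiv ℝ H x v = w ⬝ᵥ v) : grad H x = w :=
  funext fun μ => by rw [grad, hH, dotProduct_single, mul_one]

variable {α : (Fin n → ℝ) → (Fin n → ℝ)} {H : (Fin n → ℝ) → ℝ}

theorem fderiv_lagrangian_apply {Q V : E → Fin n → ℝ} {x : E}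
    (hα : DifferentiableAt ℝ α (Q x)) (hH : DifferentiableAt ℝ H (Q x))
    (hQ : DifferentiableAt ℝ Q x) (hV : DifferentiableAt ℝ V x) (v : E) :
    fderiv ℝ (fun y => α (Q y) ⬝ᵥ V y - H (Q y)) x v
      = ((jac α (Q x))ᵀ *ᵥ V x - grad H (Q x)) ⬝ᵥ fderiv ℝ Q x v
        + α (Q x) ⬝ᵥ fderiv ℝ V x v := by
  have hαQ : DifferentiableAt ℝ (fun y => α (Q y)) x := hα.comp x hQ
  have hHQ : DifferentiableAt ℝ (fun y => H (Q y)) x := hH.comp x hQ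
  rw [fderiv_fun_sub (hαQ.dotProduct hV) hHQ, _root_.sub_apply, fderiv_dotProduct_apply hαQ hV,
    fderiv_fun_comp x hα hQ, fderiv_fun_comp x hH hQ, sub_dotProduct, mulVec_transpose,
    ← dotProduct_mulVec, jac_mulVec, grad_dotProduct]
  simp only [ContinuousLinearMap.comp_apply, dotProduct_comm (V x)]
  ring

theorem fderiv_quadrature_lagrangian_apply {Q V : E → ι → Fin n → ℝ} {x : E} (b : ι → ℝ) (h : ℝ)
    (hα : ∀ i, DifferentiableAt ℝ α (Q x i)) (hH : ∀ i, DifferentiableAt ℝ H (Q x i))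
    (hQ : ∀ i, DifferentiableAt ℝ (fun y => Q y i) x)
    (hV : ∀ i, DifferentiableAt ℝ (fun y => V y i) x) (v : E) :
    fderiv ℝ (fun y => h * ∑ i, b i * (α (Q y i) ⬝ᵥ V y i - H (Q y i))) x v
      = h * ∑ i, b i * (((jac α (Q x i))ᵀ *ᵥ V x i - grad H (Q x i))
          ⬝ᵥ fderiv ℝ (fun y => Q y i) x v + α (Q x i) ⬝ᵥ fderiv ℝ (fun y => V y i) x v) := by
  have hL : ∀ i, DifferentiableAt ℝ (fun y => α (Q y i) ⬝ᵥ V y i - H (Q y i)) x :=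
    fun i => (((hα i).comp x (hQ i)).dotProduct (hV i)).sub ((hH i).comp x (hQ i))
  rw [fderiv_const_mul (.fun_sum fun i _ => (hL i).const_mul _), _root_.smul_apply, smul_eq_mul,
    fderiv_fun_sum fun i _ => (hL i).const_mul _]
  simp only [FunLike.coe_sum, Finset.sum_apply]
  congr 1
  refine Finset.sum_congr rfl fun i _ => ?_
  rw [fderiv_const_mul (hL i), _root_.smul_apply, smul_eq_mul,
    fderiv_lagrangian_apply (Q := fun y => Q y i) (hα i) (hH i) (hQ i) (hV i)]

theorem quadrature_variation_eq {m R : Type*} [Fintype m] [CommRing R]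
    (A : Matrix ι ι R) (b : ι → R) (h : R) (F P : ι → m → R) (lam c : m → R) (δV : ι → m → R)
    (hstat : ∀ j, (h * b j) • lam = (h * b j) • P j + h ^ 2 • ∑ i, (b i * A i j) • F i) :
    h * ∑ i, b i * (F i ⬝ᵥ (c + h • ∑ j, A i j • δV j) + P i ⬝ᵥ δV i)
      = (h • ∑ i, b i • F i) ⬝ᵥ c + lam ⬝ᵥ (h • ∑ i, b i • δV i) := by
  have hstat' : ∀ j, h * b j * (lam ⬝ᵥ δV j)
      = h * b j * (P j ⬝ᵥ δV j) + h ^ 2 * ∑ i, b i * A i j * (F i ⬝ᵥ δV j) := fun j => by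
    simpa [add_dotProduct, smul_dotProduct, sum_dotProduct] using congrArg (· ⬝ᵥ δV j) (hstat j)
  simp only [dotProduct_add, dotProduct_smul, dotProduct_sum, smul_dotProduct, sum_dotProduct,
    smul_eq_mul, mul_add, Finset.mul_sum, Finset.sum_add_distrib]
  rw [Finset.sum_comm (f := fun i j => _), add_assoc, ← Finset.sum_add_distrib]
  congr 1
  refine Finset.sum_congr rfl fun j _ => ?_
  have hsum : ∑ i, h * (b i * (h * (A i j * F i ⬝ᵥ δV j)))
      = h ^ 2 * ∑ i, b i * A i j * F i ⬝ᵥ δV j := by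
    rw [Finset.mul_sum]
    exact Finset.sum_congr rfl fun _ _ => by ring
  linear_combination hsum - hstat' j

/-- `q₀` and `q₁` are the two end points as functions of the variable: taking `(q₀, q₁)` to be
`(id, const)` or `(const, id)` gives `D₁L_d` or `D₂L_d`. -/
theorem fderiv_discrete_lagrangian_apply {A : Matrix ι ι ℝ} {b : ι → ℝ} {h : ℝ}
    {Q V : E → ι → Fin n → ℝ} {q₀ q₁ : E → Fin n → ℝ} {lam : Fin n → ℝ} {Ld : E → ℝ} {x : E}
    (hα : ∀ i, DifferentiableAt ℝ α (Q x i)) (hH : ∀ i, DifferentiableAt ℝ H (Q x i))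
    (hq₀ : DifferentiableAt ℝ q₀ x) (hV : ∀ i, DifferentiableAt ℝ (fun y => V y i) x)
    (hQ : ∀ y i, Q y i = q₀ y + h • ∑ j, A i j • V y j)
    (hq₁ : ∀ y, q₁ y = q₀ y + h • ∑ i, b i • V y i)
    (hstat : ∀ j, (h * b j) • lam = (h * b j) • α (Q x j)
      + h ^ 2 • ∑ i, (b i * A i j) • ((jac α (Q x i))ᵀ *ᵥ V x i - grad H (Q x i)))
    (hLd : ∀ y, Ld y = h * ∑ i, b i * (α (Q y i) ⬝ᵥ V y i - H (Q y i))) (v : E) :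
    fderiv ℝ Ld x v
      = (h • ∑ i, b i • ((jac α (Q x i))ᵀ *ᵥ V x i - grad H (Q x i))) ⬝ᵥ fderiv ℝ q₀ x v
        + lam ⬝ᵥ (fderiv ℝ q₁ x v - fderiv ℝ q₀ x v) := by
  have hQ' : ∀ i, HasFDerivAt (fun y => Q y i)
      (fderiv ℝ q₀ x + h • ∑ j, A i j • fderiv ℝ (fun y => V y j) x) x := fun i => by
    simp only [hQ]
    exact hasFDerivAt_add_smul_sum hq₀ hV h (A i)
  have hq₁' : fderiv ℝ q₁ x = fderiv ℝ q₀ x + h • ∑ i, b i • fderiv ℝ (fun y => V y i) x := by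
    rw [funext hq₁]
    exact (hasFDerivAt_add_smul_sum hq₀ hV h b).fderiv
  rw [funext hLd, fderiv_quadrature_lagrangian_apply b h hα hH
    (fun i => (hQ' i).differentiableAt) hV v]
  simp only [fun i => (hQ' i).fderiv, hq₁', _root_.add_apply, _root_.smul_apply, FunLike.coe_sum,
    Finset.sum_apply, add_sub_cancel_left]
  exact quadrature_variation_eq A b h (fun i => (jac α (Q x i))ᵀ *ᵥ V x i - grad H (Q x i))
    (fun i => α (Q x i)) lam (fderiv ℝ q₀ x v) (fun j => fderiv ℝ (fun y => V y j) x v) hstat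

end

theorem stage_momentum_eq {ι K M : Type*} [Fintype ι] [Field K] [AddCommGroup M] [Module K M]
    {A Abar : Matrix ι ι K} {b : ι → K} {h : K} {lam a : M} {F : ι → M} {i : ι}
    (hh : h ≠ 0) (hb : b i ≠ 0) (hsymp : ∀ j, b i * Abar i j + b j * A j i = b i * b j)
    (hstat : (h * b i) • lam = (h * b i) • a + h ^ 2 • ∑ j, (b j * A j i) • F j) :
    a = (lam - h • ∑ j, b j • F j) + h • ∑ j, Abar i j • F j := by
  have hAbar : b i • ∑ j, Abar i j • F j = b i • ∑ j, b j • F j - ∑ j, (b j * A j i) • F j := by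
    simp only [Finset.smul_sum, smul_smul, ← Finset.sum_sub_distrib, ← sub_smul]
    exact Finset.sum_congr rfl fun j _ => by rw [← hsymp j, add_sub_cancel_right]
  apply smul_right_injective M (mul_ne_zero hh hb)
  linear_combination (norm := module) -hstat - h ^ 2 • hAbar

theorem variational_integrator_eq_partitioned_runge_kutta_general
    {n s : ℕ}
    (α : (Fin n → ℝ) → (Fin n → ℝ)) (H : (Fin n → ℝ) → ℝ)
    (hα : ContDiff ℝ (⊤ : ℕ∞) α) (hH : ContDiff ℝ (⊤ : ℕ∞) H)
    (A Abar : Matrix (Fin s) (Fin s) ℝ) (b : Fin s → ℝ)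
    (hb : ∀ i, b i ≠ 0)
    (hsymp : ∀ i j, b i * Abar i j + b j * A j i = b i * b j)
    (h : ℝ) (hh : 0 < h)
    -- the internal stages and the Lagrange multiplier, as functions of `(q, q̄)`
    (Qs Qd : (Fin n → ℝ) → (Fin n → ℝ) → Fin s → (Fin n → ℝ))
    (lam : (Fin n → ℝ) → (Fin n → ℝ) → (Fin n → ℝ))
    (hQddiff : ∀ i, Differentiable ℝ (fun x : (Fin n → ℝ) × (Fin n → ℝ) => Qd x.1 x.2 i))
    -- the internal-stage relation
    (hstage : ∀ q qbar i, Qs q qbar i = q + h • ∑ j, A i j • Qd q qbar j)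
    -- the constraint `q̄ = q + h Σᵢ bᵢ Q̇ᵢ`
    (hconstraint : ∀ q qbar, qbar = q + h • ∑ i, b i • Qd q qbar i)
    -- stationarity of `h Σᵢ bᵢ L(Qᵢ,Q̇ᵢ)` in the `Q̇ⱼ` subject to the constraint,
    -- with Lagrange multiplier `λ`
    (hstat : ∀ q qbar j,
      (h * b j) • lam q qbar
        = (h * b j) • α (Qs q qbar j)
          + (h ^ 2) • ∑ i, (b i * A i j) •
              ((jac α (Qs q qbar i))ᵀ *ᵥ Qd q qbar i - grad H (Qs q qbar i)))
    -- the discrete Lagrangian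
    (Ld : (Fin n → ℝ) → (Fin n → ℝ) → ℝ)
    (hLd : ∀ q qbar, Ld q qbar
      = h * ∑ i, b i * (α (Qs q qbar i) ⬝ᵥ Qd q qbar i - H (Qs q qbar i))) :
    ∀ q qbar : Fin n → ℝ,
      ∀ (p pbar : Fin n → ℝ) (P Pd : Fin s → (Fin n → ℝ)),
        -- discrete momenta: `p = −D₁L_d(q,q̄)`, `p̄ = D₂L_d(q,q̄)`
        (p = fun μ => -(fderiv ℝ (fun x => Ld x qbar) q (Pi.single μ 1))) →
        (pbar = fun μ => fderiv ℝ (fun x => Ld q x) qbar (Pi.single μ 1)) →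
        (P = fun i => α (Qs q qbar i)) →
        (Pd = fun i => (jac α (Qs q qbar i))ᵀ *ᵥ Qd q qbar i - grad H (Qs q qbar i)) →
        -- ... then the partitioned Runge–Kutta equations for the DAE hold:
        (∀ i, P i = α (Qs q qbar i)) ∧
        (∀ i, Pd i = (jac α (Qs q qbar i))ᵀ *ᵥ Qd q qbar i - grad H (Qs q qbar i)) ∧
        (∀ i, Qs q qbar i = q + h • ∑ j, A i j • Qd q qbar j) ∧
        (∀ i, P i = p + h • ∑ j, Abar i j • Pd j) ∧
        (qbar = q + h • ∑ j, b j • Qd q qbar j) ∧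
        (pbar = p + h • ∑ j, b j • Pd j) := by
  intro q qbar p pbar P Pd hp hpbar hP hPd
  subst hP hPd
  have hαd : Differentiable ℝ α := hα.differentiable (by simp)
  have hHd : Differentiable ℝ H := hH.differentiable (by simp)
  have hD₁ : grad (fun x => Ld x qbar) q
      = h • ∑ i, b i • ((jac α (Qs q qbar i))ᵀ *ᵥ Qd q qbar i - grad H (Qs q qbar i))
        - lam q qbar :=
    grad_eq_of_fderiv_apply_eq fun v => by
      simpa [sub_dotProduct, sub_eq_add_neg] using fderiv_discrete_lagrangian_apply
        (Q := fun y => Qs y qbar) (q₀ := id) (q₁ := fun _ => qbar) (fun i => hαd _)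
        (fun i => hHd _) differentiableAt_id
        (fun i => (hQddiff i).comp (differentiable_id.prodMk (differentiable_const qbar)) q)
        (fun y => hstage y qbar) (fun y => hconstraint y qbar) (hstat q qbar)
        (fun y => hLd y qbar) v
  have hD₂ : grad (fun x => Ld q x) qbar = lam q qbar :=
    grad_eq_of_fderiv_apply_eq fun v => by
      simpa using fderiv_discrete_lagrangian_apply (Q := Qs q) (q₀ := fun _ => q) (q₁ := id)
        (fun i => hαd _) (fun i => hHd _) (differentiableAt_const q)
        (fun i => (hQddiff i).comp ((differentiable_const q).prodMk differentiable_id) qbar)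
        (hstage q) (hconstraint q) (hstat q qbar) (hLd q) v
  replace hp : p = -grad (fun x => Ld x qbar) q := hp
  rw [hD₁, neg_sub] at hp
  replace hpbar : pbar = lam q qbar := hpbar.trans hD₂
  refine ⟨fun _ => rfl, fun _ => rfl, hstage q qbar, fun i => ?_, hconstraint q qbar, ?_⟩
  · rw [hp]
    exact stage_momentum_eq hh.ne' (hb i) (hsymp i) (hstat q qbar i)
  · rw [hpbar, hp, sub_add_cancel]

/-- The variational integrator defined by the discrete Euler–Lagrange equations of the
discrete Lagrangian `L_d(q,q̄) = h Σᵢ bᵢ L(Qᵢ, Q̇ᵢ)` (internal stages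
`Qᵢ = q + h Σⱼ aᵢⱼ Q̇ⱼ`, extremal subject to `q̄ = q + h Σᵢ bᵢ Q̇ᵢ`, which is encoded by
the Lagrange-multiplier stationarity condition `hstat`), with discrete momenta
`p = −D₁L_d(q,q̄)` and `p̄ = D₂L_d(q,q̄)`, is equivalent to the partitioned Runge–Kutta
method with coefficients `(aᵢⱼ, āᵢⱼ, bᵢ)` — where `bᵢ āᵢⱼ + bⱼ aⱼᵢ = bᵢ bⱼ` — applied to
the 'Hamiltonian' differential-algebraic system `p = α(q)`, `ṗ = Dα(q)ᵀ q̇ − ∇H(q)`. -/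
theorem variational_integrator_eq_partitioned_runge_kutta
    {n s : ℕ} (hn : Even n)
    (α : (Fin n → ℝ) → (Fin n → ℝ)) (H : (Fin n → ℝ) → ℝ)
    (hα : ContDiff ℝ (⊤ : ℕ∞) α) (hH : ContDiff ℝ (⊤ : ℕ∞) H)
    (A Abar : Matrix (Fin s) (Fin s) ℝ) (b : Fin s → ℝ)
    (hb : ∀ i, b i ≠ 0)
    (hsymp : ∀ i j, b i * Abar i j + b j * A j i = b i * b j)
    (h : ℝ) (hh : 0 < h)
    -- the internal stages and the Lagrange multiplier, as functions of `(q, q̄)`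
    (Qs Qd : (Fin n → ℝ) → (Fin n → ℝ) → Fin s → (Fin n → ℝ))
    (lam : (Fin n → ℝ) → (Fin n → ℝ) → (Fin n → ℝ))
    (hQsdiff : ∀ i, Differentiable ℝ (fun x : (Fin n → ℝ) × (Fin n → ℝ) => Qs x.1 x.2 i))
    (hQddiff : ∀ i, Differentiable ℝ (fun x : (Fin n → ℝ) × (Fin n → ℝ) => Qd x.1 x.2 i))
    (hlamdiff : Differentiable ℝ (fun x : (Fin n → ℝ) × (Fin n → ℝ) => lam x.1 x.2))
    -- the internal-stage relation
    (hstage : ∀ q qbar i, Qs q qbar i = q + h • ∑ j, A i j • Qd q qbar j)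
    -- the constraint `q̄ = q + h Σᵢ bᵢ Q̇ᵢ`
    (hconstraint : ∀ q qbar, qbar = q + h • ∑ i, b i • Qd q qbar i)
    -- stationarity of `h Σᵢ bᵢ L(Qᵢ,Q̇ᵢ)` in the `Q̇ⱼ` subject to the constraint,
    -- with Lagrange multiplier `λ`
    (hstat : ∀ q qbar j,
      (h * b j) • lam q qbar
        = (h * b j) • α (Qs q qbar j)
          + (h ^ 2) • ∑ i, (b i * A i j) •
              ((jac α (Qs q qbar i))ᵀ *ᵥ Qd q qbar i - grad H (Qs q qbar i)))
    -- the discrete Lagrangian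
    (Ld : (Fin n → ℝ) → (Fin n → ℝ) → ℝ)
    (hLd : ∀ q qbar, Ld q qbar
      = h * ∑ i, b i * (α (Qs q qbar i) ⬝ᵥ Qd q qbar i - H (Qs q qbar i))) :
    ∀ q qbar : Fin n → ℝ,
      ∀ (p pbar : Fin n → ℝ) (P Pd : Fin s → (Fin n → ℝ)),
        -- discrete momenta: `p = −D₁L_d(q,q̄)`, `p̄ = D₂L_d(q,q̄)`
        (p = fun μ => -(fderiv ℝ (fun x => Ld x qbar) q (Pi.single μ 1))) →
        (pbar = fun μ => fderiv ℝ (fun x => Ld q x) qbar (Pi.single μ 1)) →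
        (P = fun i => α (Qs q qbar i)) →
        (Pd = fun i => (jac α (Qs q qbar i))ᵀ *ᵥ Qd q qbar i - grad H (Qs q qbar i)) →
        -- ... then the partitioned Runge–Kutta equations for the DAE hold:
        (∀ i, P i = α (Qs q qbar i)) ∧
        (∀ i, Pd i = (jac α (Qs q qbar i))ᵀ *ᵥ Qd q qbar i - grad H (Qs q qbar i)) ∧
        (∀ i, Qs q qbar i = q + h • ∑ j, A i j • Qd q qbar j) ∧
        (∀ i, P i = p + h • ∑ j, Abar i j • Pd j) ∧
        (qbar = q + h • ∑ j, b j • Qd q qbar j) ∧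
        (pbar = p + h • ∑ j, b j • Pd j) :=
  variational_integrator_eq_partitioned_runge_kutta_general α H hα hH A Abar b hb hsymp h hh Qs Qd
    lam hQddiff hstage hconstraint hstat Ld hLd
end

section
/- Suppose α(q) = −(1/2)Λq with Λ a constant invertible antisymmetric n×n matrix, and consider a non-partitioned Runge–Kutta method (ā_{ij} = a_{ij}) applied to the DAE p = −(1/2)Λq, ṗ = (1/2)Λq̇ − ∇H(q): P_i = −(1/2)ΛQ_i, Ṗ_i = (1/2)ΛQ̇_i − ∇H(Q_i), Q_i = q + hΣ_j a_{ij}Q̇_j, P_i = p + hΣ_j a_{ij}Ṗ_j, q̄ = q + hΣ_j b_jQ̇_j, p̄ = p + hΣ_j b_jṖ_j. If the Runge–Kutta matrix A = (a_{ij}) is invertible and p = −(1/2)Λq, then this scheme is equivalent to the same Runge–Kutta method applied to the ODE Λq̇ = ∇H(q): the internal stages satisfy Ṗ_i = −(1/2)ΛQ̇_i and ΛQ̇_i = ∇H(Q_i) for all i, and moreover p̄ = −(1/2)Λq̄. -/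
open Matrix

/-- For `α(q) = −(1/2)Λq` with `Λ` constant, invertible and antisymmetric, a
non-partitioned Runge–Kutta method with invertible coefficient matrix `A` applied to the
DAE `p = −(1/2)Λq`, `ṗ = (1/2)Λq̇ − ∇H(q)`, started from consistent data
`p = −(1/2)Λq`, is equivalent to the same Runge–Kutta method applied to the ODE
`Λq̇ = ∇H(q)`: the internal stages satisfy `Ṗᵢ = −(1/2)ΛQ̇ᵢ` and `ΛQ̇ᵢ = ∇H(Qᵢ)`, and
moreover `p̄ = −(1/2)Λq̄`. -/
theorem linear_alpha_rk_dae_equiv_rk_ode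
    {n s : ℕ} (hn : Even n)
    (H : (Fin n → ℝ) → ℝ) (hH : ContDiff ℝ (⊤ : ℕ∞) H)
    (Λ : Matrix (Fin n) (Fin n) ℝ) (hΛinv : IsUnit Λ.det) (hΛanti : Λᵀ = -Λ)
    (A : Matrix (Fin s) (Fin s) ℝ) (b : Fin s → ℝ) (hA : IsUnit A.det)
    (h : ℝ) (hh : 0 < h)
    (q p qbar pbar : Fin n → ℝ) (Qs Qd P Pd : Fin s → (Fin n → ℝ))
    (h1 : ∀ i, P i = -(((1:ℝ)/2) • (Λ *ᵥ Qs i)))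
    (h2 : ∀ i, Pd i = ((1:ℝ)/2) • (Λ *ᵥ Qd i) - grad H (Qs i))
    (h3 : ∀ i, Qs i = q + h • ∑ j, A i j • Qd j)
    (h4 : ∀ i, P i = p + h • ∑ j, A i j • Pd j)
    (h5 : qbar = q + h • ∑ j, b j • Qd j)
    (h6 : pbar = p + h • ∑ j, b j • Pd j)
    (hcons : p = -(((1:ℝ)/2) • (Λ *ᵥ q))) :
    (∀ i, Pd i = -(((1:ℝ)/2) • (Λ *ᵥ Qd i))) ∧
    (∀ i, Λ *ᵥ Qd i = grad H (Qs i)) ∧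
    pbar = -(((1:ℝ)/2) • (Λ *ᵥ qbar)) := by
  have hlin : ∀ v, Λ *ᵥ v = Λ.mulVecLin v := fun _ => rfl
  -- key: ∑ j, A i j • (Pd j + (1/2) • (Λ *ᵥ Qd j)) = 0
  have key : ∀ i, ∑ j, A i j • (Pd j + ((1:ℝ)/2) • (Λ *ᵥ Qd j)) = 0 := by
    intro i
    have e1 := h4 i
    rw [h1 i, h3 i, hcons] at e1
    have e2 : h • ∑ j, A i j • (Pd j + ((1:ℝ)/2) • (Λ *ᵥ Qd j)) = 0 := by
      have expand : (((1:ℝ)/2) • (Λ *ᵥ (q + h • ∑ j, A i j • Qd j)))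
          = ((1:ℝ)/2) • (Λ *ᵥ q) + h • ∑ j, A i j • (((1:ℝ)/2) • (Λ *ᵥ Qd j)) := by
        simp only [hlin, map_add, _root_.map_smul, map_sum, smul_add, Finset.smul_sum,
          smul_comm ((1:ℝ)/2)]
      have e1' := e1
      rw [expand] at e1'
      have expand2 : h • ∑ j, A i j • (Pd j + ((1:ℝ)/2) • (Λ *ᵥ Qd j))
          = h • ∑ j, A i j • Pd j + h • ∑ j, A i j • (((1:ℝ)/2) • (Λ *ᵥ Qd j)) := by
        simp [smul_add, Finset.sum_add_distrib]
      rw [expand2]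
      linear_combination (norm := module) -e1'
    have := smul_eq_zero.mp e2
    rcases this with h0 | h0
    · exact absurd h0 (ne_of_gt hh)
    · exact h0
  -- invertibility gives stage relation
  have hstage : ∀ j, Pd j + ((1:ℝ)/2) • (Λ *ᵥ Qd j) = 0 := by
    intro j
    funext μ
    have hv : A *ᵥ (fun j => (Pd j + ((1:ℝ)/2) • (Λ *ᵥ Qd j)) μ) = 0 := by
      funext i
      have := congrFun (key i) μ
      simpa [Matrix.mulVec, dotProduct, Finset.sum_apply, mul_add] using this
    have hinj : Function.Injective (A.mulVec) := by
      intro x y hxy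
      have : A⁻¹ *ᵥ (A *ᵥ x) = A⁻¹ *ᵥ (A *ᵥ y) := by rw [hxy]
      rwa [Matrix.mulVec_mulVec, Matrix.mulVec_mulVec, Matrix.nonsing_inv_mul A hA,
        Matrix.one_mulVec, Matrix.one_mulVec] at this
    have h0 : (fun j => (Pd j + ((1:ℝ)/2) • (Λ *ᵥ Qd j)) μ) = 0 := by
      apply hinj
      rw [hv, Matrix.mulVec_zero]
    exact congrFun h0 j
  have c1 : ∀ i, Pd i = -(((1:ℝ)/2) • (Λ *ᵥ Qd i)) := by
    intro i
    have := hstage i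
    linear_combination (norm := module) this
  have c2 : ∀ i, Λ *ᵥ Qd i = grad H (Qs i) := by
    intro i
    have e := h2 i
    rw [c1 i] at e
    funext μ
    have := congrFun e μ
    simp only [Pi.neg_apply, Pi.smul_apply, Pi.sub_apply, smul_eq_mul] at this
    linarith
  refine ⟨c1, c2, ?_⟩
  rw [h6, h5, hcons]
  have expand : (((1:ℝ)/2) • (Λ *ᵥ (q + h • ∑ j, b j • Qd j)))
      = ((1:ℝ)/2) • (Λ *ᵥ q) + h • ∑ j, b j • (((1:ℝ)/2) • (Λ *ᵥ Qd j)) := by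
    simp only [hlin, map_add, _root_.map_smul, map_sum, smul_add, Finset.smul_sum,
      smul_comm ((1:ℝ)/2)]
  rw [expand]
  have : ∑ j, b j • Pd j = -∑ j, b j • (((1:ℝ)/2) • (Λ *ᵥ Qd j)) := by
    rw [← Finset.sum_neg_distrib]
    exact Finset.sum_congr rfl fun j _ => by rw [c1 j, smul_neg]
  rw [this]
  module
end

section
/- Suppose α(q) = −(1/2)Λq with Λ constant, invertible and antisymmetric, and the Runge–Kutta matrix A = (a_{ij}) is invertible. Then the numerical flow on T*Q ≅ ℝ^n × ℝ^n defined by the non-partitioned Runge–Kutta scheme for the DAE p = −(1/2)Λq, ṗ = (1/2)Λq̇ − ∇H(q) leaves the primary constraint N = {(q,p) : p = −(1/2)Λq} invariant: if (q,p) ∈ N, then the output (q̄, p̄) of one step of the scheme satisfies (q̄, p̄) ∈ N. -/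
open Matrix

/-- For `α(q) = −(1/2)Λq` with `Λ` constant, invertible and antisymmetric, and an
invertible Runge–Kutta matrix `A`, the numerical flow on `T*Q ≅ ℝ^n × ℝ^n` defined by
the non-partitioned Runge–Kutta scheme for the DAE `p = −(1/2)Λq`,
`ṗ = (1/2)Λq̇ − ∇H(q)` leaves the primary constraint `N = {(q,p) : p = −(1/2)Λq}`
invariant: if `(q,p) ∈ N` then `(q̄,p̄) ∈ N`. -/
theorem rk_flow_preserves_primary_constraint
    {n s : ℕ} (hn : Even n)
    (H : (Fin n → ℝ) → ℝ) (hH : ContDiff ℝ (⊤ : ℕ∞) H)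
    (Λ : Matrix (Fin n) (Fin n) ℝ) (hΛinv : IsUnit Λ.det) (hΛanti : Λᵀ = -Λ)
    (A : Matrix (Fin s) (Fin s) ℝ) (b : Fin s → ℝ) (hA : IsUnit A.det)
    (h : ℝ) (hh : 0 < h)
    (N : Set ((Fin n → ℝ) × (Fin n → ℝ)))
    (hN : N = {x : (Fin n → ℝ) × (Fin n → ℝ) | x.2 = -(((1:ℝ)/2) • (Λ *ᵥ x.1))})
    (q p qbar pbar : Fin n → ℝ) (Qs Qd P Pd : Fin s → (Fin n → ℝ))
    (h1 : ∀ i, P i = -(((1:ℝ)/2) • (Λ *ᵥ Qs i)))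
    (h2 : ∀ i, Pd i = ((1:ℝ)/2) • (Λ *ᵥ Qd i) - grad H (Qs i))
    (h3 : ∀ i, Qs i = q + h • ∑ j, A i j • Qd j)
    (h4 : ∀ i, P i = p + h • ∑ j, A i j • Pd j)
    (h5 : qbar = q + h • ∑ j, b j • Qd j)
    (h6 : pbar = p + h • ∑ j, b j • Pd j)
    (hqp : (q, p) ∈ N) :
    (qbar, pbar) ∈ N := by
  subst hN h5 h6
  have hp : p = -(((1:ℝ)/2) • (Λ *ᵥ q)) := hqp
  have hne : h ≠ 0 := ne_of_gt hh
  have key : ∀ j, Pd j + ((1:ℝ)/2) • (Λ *ᵥ Qd j) = 0 := by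
    have hsum : ∀ i, ∑ j, A i j • (Pd j + ((1:ℝ)/2) • (Λ *ᵥ Qd j)) = 0 := by
      intro i
      have e1 := h4 i
      rw [h1 i, h3 i, hp] at e1
      have e2 : Λ *ᵥ (q + h • ∑ j, A i j • Qd j)
          = Λ *ᵥ q + h • ∑ j, A i j • (Λ *ᵥ Qd j) := by
        rw [Matrix.mulVec_add, Matrix.mulVec_smul]
        congr 1
        rw [← Matrix.mulVecLin_apply, map_sum]
        simp [Matrix.mulVecLin_apply, Matrix.mulVec_smul]
      rw [e2] at e1
      have esplit : ∑ j, A i j • (Pd j + ((1:ℝ)/2) • (Λ *ᵥ Qd j))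
          = (∑ j, A i j • Pd j) + (1/2 : ℝ) • ∑ j, A i j • (Λ *ᵥ Qd j) := by
        rw [Finset.smul_sum, ← Finset.sum_add_distrib]
        refine Finset.sum_congr rfl fun j _ => ?_
        rw [smul_add, smul_comm]
      have e4 : (∑ j, A i j • Pd j)
          = -(((1:ℝ)/2) • ∑ j, A i j • (Λ *ᵥ Qd j)) := by
        rw [smul_add, neg_add] at e1
        have e5 := add_left_cancel e1
        apply smul_right_injective (Fin n → ℝ) hne
        show h • (∑ j, A i j • Pd j)
            = h • (-(((1:ℝ)/2) • ∑ j, A i j • (Λ *ᵥ Qd j)))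
        rw [← e5, smul_neg, smul_comm]
      rw [esplit, e4, neg_add_cancel]
    intro j
    funext μ
    have hinj : Function.Injective (A.mulVec) :=
      Matrix.mulVec_injective_iff_isUnit.2 ((Matrix.isUnit_iff_isUnit_det A).2 hA)
    have hv : A *ᵥ (fun k => (Pd k + ((1:ℝ)/2) • (Λ *ᵥ Qd k)) μ) = 0 := by
      funext i
      have := congrFun (hsum i) μ
      simpa [Matrix.mulVec, dotProduct, Finset.sum_apply, mul_add,
        Finset.sum_add_distrib] using this
    have h0 : (fun k => (Pd k + ((1:ℝ)/2) • (Λ *ᵥ Qd k)) μ) = 0 := by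
      apply hinj
      rw [hv, Matrix.mulVec_zero]
    exact congrFun h0 j
  have hPd : ∀ j, Pd j = -(((1:ℝ)/2) • (Λ *ᵥ Qd j)) := fun j =>
    eq_neg_of_add_eq_zero_left (key j)
  show p + h • ∑ j, b j • Pd j = -(((1:ℝ)/2) • (Λ *ᵥ (q + h • ∑ j, b j • Qd j)))
  rw [hp]
  have e2 : Λ *ᵥ (q + h • ∑ j, b j • Qd j)
      = Λ *ᵥ q + h • ∑ j, b j • (Λ *ᵥ Qd j) := by
    rw [Matrix.mulVec_add, Matrix.mulVec_smul]
    congr 1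
    rw [← Matrix.mulVecLin_apply, map_sum]
    simp [Matrix.mulVecLin_apply, Matrix.mulVec_smul]
  rw [e2]
  have e3 : ∑ j, b j • Pd j = -((1/2:ℝ) • ∑ j, b j • (Λ *ᵥ Qd j)) := by
    rw [Finset.smul_sum, ← Finset.sum_neg_distrib]
    refine Finset.sum_congr rfl fun j _ => ?_
    rw [hPd j, smul_neg, smul_comm]
  rw [e3]
  module
end

section
/- Suppose α(q) = −(1/2)Λq with Λ constant, invertible and antisymmetric, the Runge–Kutta matrix A = (a_{ij}) is invertible, and the coefficients satisfy the symplecticity condition b_i a_{ij} + b_j a_{ji} = b_i b_j for all i,j = 1,…,s. Then the discrete Hamiltonian map of the associated variational Runge–Kutta integrator is symplectic on the primary constraint N = {(q,p) : p = −(1/2)Λq}: identifying N with ℝ^n via q, the one-step map Φ_h: q ↦ q̄ (defined for h small enough to be a well-defined differentiable map) satisfies DΦ_h(q)ᵀ Λ DΦ_h(q) = Λ, i.e., it preserves the symplectic form Ω_N whose coordinate matrix is Λ. -/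
/-!
Differentiating the defining equations of `Φ_h` shows that `J = DΦ_h(q)` is produced by the same
Runge–Kutta method applied to the variational equation: with `Vᵢ = DQ̇ᵢ`, the stage Jacobians are
`DQᵢ = 1 + h Σⱼ aᵢⱼ Vⱼ`, `J = 1 + h Σⱼ bⱼ Vⱼ`, and `Λ Vᵢ = ∇²H(Qᵢ) DQᵢ`. As the Hessian is
symmetric and `Λ` antisymmetric, `B(P, Q) = Pᵀ Λ Q` satisfies `B(DQᵢ, Vᵢ) + B(Vᵢ, DQᵢ) = 0` at every
stage. Under `bᵢaᵢⱼ + bⱼaⱼᵢ = bᵢbⱼ` a Runge–Kutta step conserves any bilinear `B(y, y)` with this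
stage property (Cooper's argument), so `JᵀΛJ = B(J, J) = B(1, 1) = Λ`.
-/

open Matrix

theorem bilin_conserved_of_symplectic_rk {R M N ι : Type*} [CommRing R] [AddCommGroup M]
    [Module R M] [AddCommGroup N] [Module R N] [Fintype ι]
    (B : M →ₗ[R] M →ₗ[R] N) (A : Matrix ι ι R) (b : ι → R)
    (hsymp : ∀ i j, b i * A i j + b j * A j i = b i * b j) (h : R) (y₀ : M) (k : ι → M)
    (hk : ∀ i, B (y₀ + h • ∑ j, A i j • k j) (k i) + B (k i) (y₀ + h • ∑ j, A i j • k j) = 0) :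
    B (y₀ + h • ∑ i, b i • k i) (y₀ + h • ∑ i, b i • k i) = B y₀ y₀ := by
  set K : ι → ι → N := fun i j => B (k i) (k j)
  have hstage (i : ι) :
      B y₀ (k i) + B (k i) y₀ = -h • ∑ j, A i j • (K j i + K i j) := by
    have hki := hk i
    simp only [map_add, map_smul, map_sum, LinearMap.add_apply, LinearMap.smul_apply,
      LinearMap.sum_apply, smul_add, Finset.sum_add_distrib] at hki ⊢
    linear_combination (norm := module) hki
  have hcross : B y₀ (∑ i, b i • k i) + B (∑ i, b i • k i) y₀
      = -h • ∑ i, ∑ j, (b i * b j) • K i j := by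
    calc B y₀ (∑ i, b i • k i) + B (∑ i, b i • k i) y₀
        = -h • ∑ i, ∑ j, (b i * A i j) • (K j i + K i j) := by
          simp only [map_sum, map_smul, LinearMap.sum_apply, LinearMap.smul_apply,
            ← Finset.sum_add_distrib, ← smul_add, hstage, Finset.smul_sum, smul_smul]
          refine Finset.sum_congr rfl fun i _ => Finset.sum_congr rfl fun j _ => ?_
          rw [mul_left_comm]
      _ = -h • ∑ i, ∑ j, (b i * A i j + b j * A j i) • K i j := by
          simp only [smul_add, add_smul, Finset.sum_add_distrib]
          rw [add_comm, Finset.sum_comm (f := fun i j => (b i * A i j) • K j i)]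
      _ = -h • ∑ i, ∑ j, (b i * b j) • K i j := by simp only [hsymp]
  have hquad : B (∑ i, b i • k i) (∑ i, b i • k i) = ∑ i, ∑ j, (b i * b j) • K i j := by
    simp only [map_sum, map_smul, LinearMap.sum_apply, LinearMap.smul_apply, Finset.smul_sum,
      smul_smul, K]
    rw [Finset.sum_comm]
    simp only [mul_comm]
  calc B (y₀ + h • ∑ i, b i • k i) (y₀ + h • ∑ i, b i • k i)
      = B y₀ y₀ + h • (B y₀ (∑ i, b i • k i) + B (∑ i, b i • k i) y₀)
          + (h * h) • B (∑ i, b i • k i) (∑ i, b i • k i) := by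
        simp only [map_add, map_smul, LinearMap.add_apply, LinearMap.smul_apply]
        module
    _ = B y₀ y₀ := by
        rw [hcross, hquad]
        module

section TransposeMulMul

variable {ι R : Type*} [Fintype ι] [CommRing R]

def transposeMulMulBilin (Λ : Matrix ι ι R) :
    Matrix ι ι R →ₗ[R] Matrix ι ι R →ₗ[R] Matrix ι ι R :=
  LinearMap.mk₂ R (fun P Q => Pᵀ * Λ * Q)
    (fun _ _ _ => by simp only [transpose_add, Matrix.add_mul])
    (fun _ _ _ => by simp only [transpose_smul, Matrix.smul_mul])
    (fun _ _ _ => by simp only [Matrix.mul_add])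
    (fun _ _ _ => by simp only [Matrix.mul_smul])

@[simp]
theorem transposeMulMulBilin_apply (Λ P Q : Matrix ι ι R) :
    transposeMulMulBilin Λ P Q = Pᵀ * Λ * Q := rfl

theorem transpose_mul_mul_add_eq_zero_of_mul_eq_mul {Λ S X V : Matrix ι ι R} (hΛ : Λᵀ = -Λ)
    (hS : Sᵀ = S) (hV : Λ * V = S * X) : Xᵀ * Λ * V + Vᵀ * Λ * X = 0 := by
  have hXV : Xᵀ * Λ * V = Xᵀ * S * X := by rw [Matrix.mul_assoc, hV, Matrix.mul_assoc]
  have hVX : Vᵀ * Λ * X = -(Xᵀ * Λ * V)ᵀ := by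
    simp only [transpose_mul, transpose_transpose, hΛ, Matrix.mul_neg, Matrix.neg_mul, neg_neg,
      Matrix.mul_assoc]
  rw [hVX, hXV]
  simp only [transpose_mul, transpose_transpose, hS, Matrix.mul_assoc, add_neg_cancel]

theorem transpose_mul_mul_eq_of_symplectic_rk {κ : Type*} [Fintype κ] [DecidableEq ι]
    {Λ : Matrix ι ι R} (hΛ : Λᵀ = -Λ) (A : Matrix κ κ R) (b : κ → R)
    (hsymp : ∀ i j, b i * A i j + b j * A j i = b i * b j) (h : R) (V S : κ → Matrix ι ι R)
    (hS : ∀ i, (S i)ᵀ = S i) (hV : ∀ i, Λ * V i = S i * (1 + h • ∑ j, A i j • V j)) :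
    (1 + h • ∑ i, b i • V i)ᵀ * Λ * (1 + h • ∑ i, b i • V i) = Λ := by
  have hconserved := bilin_conserved_of_symplectic_rk (transposeMulMulBilin Λ) A b hsymp h 1 V
    fun i => transpose_mul_mul_add_eq_zero_of_mul_eq_mul hΛ (hS i) (hV i)
  simpa only [transposeMulMulBilin_apply, transpose_one, Matrix.one_mul, Matrix.mul_one]
    using hconserved

end TransposeMulMul

section Jacobian

variable {n : ℕ}

theorem jac_eq_toMatrix' (f : (Fin n → ℝ) → (Fin n → ℝ)) (q : Fin n → ℝ) :
    jac f q = LinearMap.toMatrix' (fderiv ℝ f q : (Fin n → ℝ) →ₗ[ℝ] Fin n → ℝ) := rfl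

theorem jac_comp {f g : (Fin n → ℝ) → (Fin n → ℝ)} {q : Fin n → ℝ}
    (hg : DifferentiableAt ℝ g (f q)) (hf : DifferentiableAt ℝ f q) :
    jac (fun x => g (f x)) q = jac g (f q) * jac f q := by
  rw [jac_eq_toMatrix', fderiv_fun_comp q hg hf, jac_eq_toMatrix', jac_eq_toMatrix',
    ← LinearMap.toMatrix'_comp, ContinuousLinearMap.toLinearMap_comp]

theorem jac_mulVec_s12 {f : (Fin n → ℝ) → (Fin n → ℝ)} {q : Fin n → ℝ} (M : Matrix (Fin n) (Fin n) ℝ)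
    (hf : DifferentiableAt ℝ f q) : jac (fun x => M *ᵥ f x) q = M * jac f q := by
  let L := LinearMap.toContinuousLinearMap (Matrix.toLin' M)
  have hjacL : jac L (f q) = M := by
    rw [jac_eq_toMatrix', L.fderiv, LinearMap.coe_toContinuousLinearMap,
      LinearMap.toMatrix'_toLin']
  have hcomp := jac_comp L.differentiableAt hf
  rwa [hjacL] at hcomp

theorem jac_add_smul_sum {ι : Type*} [Fintype ι] (c : ι → ℝ)
    (f : ι → (Fin n → ℝ) → (Fin n → ℝ)) (h : ℝ) {q : Fin n → ℝ}
    (hf : ∀ j, DifferentiableAt ℝ (f j) q) :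
    jac (fun x => x + h • ∑ j, c j • f j x) q = 1 + h • ∑ j, c j • jac (f j) q := by
  have hderiv : fderiv ℝ (fun x => x + h • ∑ j, c j • f j x) q
      = ContinuousLinearMap.id ℝ _ + h • ∑ j, c j • fderiv ℝ (f j) q := by
    have hsum : HasFDerivAt (fun x => ∑ j, c j • f j x) (∑ j, c j • fderiv ℝ (f j) q) q :=
      HasFDerivAt.fun_sum fun j _ => ((hf j).hasFDerivAt).const_smul (c j)
    exact ((hasFDerivAt_id q).add (hsum.const_smul h)).fderiv
  simp only [jac_eq_toMatrix', hderiv, ContinuousLinearMap.toLinearMap_add,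
    ContinuousLinearMap.coe_id, ContinuousLinearMap.toLinearMap_smul,
    ContinuousLinearMap.toLinearMap_sum, map_add, map_smul, map_sum,
    LinearMap.toMatrix'_id]

end Jacobian

section Hessian

variable {n : ℕ} {H : (Fin n → ℝ) → ℝ}

theorem differentiable_grad (hH : ContDiff ℝ 2 H) : Differentiable ℝ (grad H) :=
  differentiable_pi.mpr fun _ =>
    ((hH.fderiv_right le_rfl).differentiable one_ne_zero).clm_apply (differentiable_const _)

theorem jac_grad_apply (hH : ContDiff ℝ 2 H) (y : Fin n → ℝ) (μ ν : Fin n) :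
    jac (grad H) y μ ν = fderiv ℝ (fderiv ℝ H) y (Pi.single ν 1) (Pi.single μ 1) := by
  have hH' : Differentiable ℝ (fderiv ℝ H) := (hH.fderiv_right le_rfl).differentiable one_ne_zero
  have hpartial : ∀ i : Fin n,
      DifferentiableAt ℝ (fun x => fderiv ℝ H x (Pi.single i 1)) y := fun i =>
    (hH' y).clm_apply (differentiableAt_const _)
  have hgrad : grad H = fun x i => fderiv ℝ H x (Pi.single i 1) := rfl
  rw [jac, hgrad, fderiv_pi hpartial, ContinuousLinearMap.pi_apply,
    fderiv_clm_apply (hH' y) (differentiableAt_const _)]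
  simp only [fderiv_fun_const, Pi.zero_apply, ContinuousLinearMap.comp_zero, zero_add,
    ContinuousLinearMap.flip_apply]

theorem transpose_jac_grad (hH : ContDiff ℝ 2 H) (y : Fin n → ℝ) :
    (jac (grad H) y)ᵀ = jac (grad H) y := by
  ext μ ν
  rw [transpose_apply, jac_grad_apply hH, jac_grad_apply hH]
  exact hH.contDiffAt.isSymmSndFDerivAt (by simp) _ _

end Hessian

theorem vrk_symplectic_on_primary_constraint_general
    {n s : ℕ}
    (H : (Fin n → ℝ) → ℝ) (hH : ContDiff ℝ (⊤ : ℕ∞) H)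
    (Λ : Matrix (Fin n) (Fin n) ℝ) (hΛanti : Λᵀ = -Λ)
    (A : Matrix (Fin s) (Fin s) ℝ) (b : Fin s → ℝ)
    (hsymp : ∀ i j, b i * A i j + b j * A j i = b i * b j)
    (h : ℝ)
    (Qs Qd : (Fin n → ℝ) → Fin s → (Fin n → ℝ))
    (Φ : (Fin n → ℝ) → (Fin n → ℝ))
    (hQddiff : ∀ i, Differentiable ℝ (fun q => Qd q i))
    (heq1 : ∀ q i, Λ *ᵥ Qd q i = grad H (Qs q i))
    (heq2 : ∀ q i, Qs q i = q + h • ∑ j, A i j • Qd q j)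
    (heq3 : ∀ q, Φ q = q + h • ∑ j, b j • Qd q j) :
    ∀ q : Fin n → ℝ, (jac Φ q)ᵀ * Λ * jac Φ q = Λ := by
  intro q
  have hH2 : ContDiff ℝ 2 H := hH.of_le (WithTop.coe_le_coe.mpr le_top)
  set V : Fin s → Matrix (Fin n) (Fin n) ℝ := fun i => jac (fun x => Qd x i) q
  have hQs (i : Fin s) : (fun x => Qs x i) = fun x => x + h • ∑ j, A i j • Qd x j :=
    funext fun x => heq2 x i
  have hQsdiff (i : Fin s) : DifferentiableAt ℝ (fun x => Qs x i) q := by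
    rw [hQs]
    fun_prop
  have hstage (i : Fin s) : Λ * V i = jac (grad H) (Qs q i) * (1 + h • ∑ j, A i j • V j) :=
    calc Λ * V i = jac (fun x => Λ *ᵥ Qd x i) q := (jac_mulVec_s12 Λ (hQddiff i q)).symm
      _ = jac (fun x => grad H (Qs x i)) q := by simp only [heq1]
      _ = jac (grad H) (Qs q i) * jac (fun x => Qs x i) q :=
        jac_comp (differentiable_grad hH2 _) (hQsdiff i)
      _ = jac (grad H) (Qs q i) * (1 + h • ∑ j, A i j • V j) := by
        rw [hQs, jac_add_smul_sum _ _ h fun j => hQddiff j q]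
  have hΦ : jac Φ q = 1 + h • ∑ j, b j • V j := by
    rw [show Φ = _ from funext heq3]
    exact jac_add_smul_sum _ _ h fun j => hQddiff j q
  rw [hΦ]
  exact transpose_mul_mul_eq_of_symplectic_rk hΛanti A b hsymp h V _
    (fun i => transpose_jac_grad hH2 _) hstage

/-- For `α(q) = −(1/2)Λq` with `Λ` constant, invertible and antisymmetric, an invertible
Runge–Kutta matrix `A`, and coefficients satisfying the symplecticity condition
`bᵢaᵢⱼ + bⱼaⱼᵢ = bᵢbⱼ`, the discrete Hamiltonian map of the associated variational
Runge–Kutta integrator is symplectic on the primary constraint `N ≅ ℝ^n`: the one-step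
map `Φ_h : q ↦ q̄`, defined implicitly by `ΛQ̇ᵢ = ∇H(Qᵢ)`, `Qᵢ = q + hΣⱼaᵢⱼQ̇ⱼ`,
`q̄ = q + hΣⱼbⱼQ̇ⱼ`, satisfies `DΦ_h(q)ᵀ Λ DΦ_h(q) = Λ`. -/
theorem vrk_symplectic_on_primary_constraint
    {n s : ℕ} (hn : Even n)
    (H : (Fin n → ℝ) → ℝ) (hH : ContDiff ℝ (⊤ : ℕ∞) H)
    (Λ : Matrix (Fin n) (Fin n) ℝ) (hΛinv : IsUnit Λ.det) (hΛanti : Λᵀ = -Λ)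
    (A : Matrix (Fin s) (Fin s) ℝ) (b : Fin s → ℝ) (hA : IsUnit A.det)
    (hsymp : ∀ i j, b i * A i j + b j * A j i = b i * b j)
    (h : ℝ) (hh : 0 < h)
    (Qs Qd : (Fin n → ℝ) → Fin s → (Fin n → ℝ))
    (Φ : (Fin n → ℝ) → (Fin n → ℝ))
    (hQsdiff : ∀ i, Differentiable ℝ (fun q => Qs q i))
    (hQddiff : ∀ i, Differentiable ℝ (fun q => Qd q i))
    (hΦdiff : Differentiable ℝ Φ)
    (heq1 : ∀ q i, Λ *ᵥ Qd q i = grad H (Qs q i))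
    (heq2 : ∀ q i, Qs q i = q + h • ∑ j, A i j • Qd q j)
    (heq3 : ∀ q, Φ q = q + h • ∑ j, b j • Qd q j) :
    ∀ q : Fin n → ℝ, (jac Φ q)ᵀ * Λ * jac Φ q = Λ :=
  vrk_symplectic_on_primary_constraint_general H hH Λ hΛanti A b hsymp h Qs Qd Φ hQddiff heq1 heq2
    heq3
end

section
/- Suppose α(q) = −(1/2)Λq with Λ constant, invertible and antisymmetric, and let a Runge–Kutta method with invertible coefficient matrix A = (a_{ij}) and weights b_i applied to the ODE Λq̇ = ∇H(q) be convergent of order r, i.e., for initial data q in an open set U, final time T and K steps of size h = T/K, ‖q_K − q(T)‖ ≤ C h^{r+1} where q(t) is the exact solution with q(0) = q. Then the same Runge–Kutta method applied to the DAE system p = −(1/2)Λq, ṗ = (1/2)Λq̇ − ∇H(q), started from consistent data (q, −(1/2)Λq), retains this order of convergence in both components: ‖q_K − q(T)‖ ≤ C h^{r+1} and ‖p_K − p(T)‖ ≤ (1/2)‖Λ‖ C h^{r+1}, where p(t) = −(1/2)Λq(t). -/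
open Matrix

/-- The operator norm `‖Λ‖` of the linear map `v ↦ Λ *ᵥ v`. -/
noncomputable def opNorm {n : ℕ} (Λ : Matrix (Fin n) (Fin n) ℝ) : ℝ :=
  ‖LinearMap.toContinuousLinearMap Λ.mulVecLin‖

lemma mulVec_sum_smul {n s : ℕ} (Λ : Matrix (Fin n) (Fin n) ℝ) (c : Fin s → ℝ)
    (v : Fin s → Fin n → ℝ) :
    Λ *ᵥ (∑ j, c j • v j) = ∑ j, c j • (Λ *ᵥ v j) := by
  have := map_sum Λ.mulVecLin (fun j => c j • v j) Finset.univ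
  simp only [Matrix.mulVecLin_apply] at this
  rw [this]
  exact Finset.sum_congr rfl fun j _ => Matrix.mulVec_smul Λ (c j) (v j)

/-- For `α(q) = −(1/2)Λq` with `Λ` constant, invertible and antisymmetric: if a
Runge–Kutta method with invertible coefficient matrix `A` and weights `b`, whose
one-step map for the ODE `Λq̇ = ∇H(q)` is `Φ`, is convergent of order `r` on an open set
`U` (i.e. `‖q_K − q(T)‖ ≤ C h^{r+1}` with `h = T/K` for exact solutions started in `U`),
then the same Runge–Kutta method applied to the DAE `p = −(1/2)Λq`,
`ṗ = (1/2)Λq̇ − ∇H(q)`, started from the consistent data `(q, −(1/2)Λq)`, retains this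
order of convergence in both components: `‖q_K − q(T)‖ ≤ C h^{r+1}` and
`‖p_K − p(T)‖ ≤ (1/2)‖Λ‖ C h^{r+1}` where `p(t) = −(1/2)Λq(t)`. -/
theorem rk_dae_retains_classical_order
    {n s : ℕ} (hn : Even n)
    (H : (Fin n → ℝ) → ℝ) (hH : ContDiff ℝ (⊤ : ℕ∞) H)
    (Λ : Matrix (Fin n) (Fin n) ℝ) (hΛinv : IsUnit Λ.det) (hΛanti : Λᵀ = -Λ)
    (A : Matrix (Fin s) (Fin s) ℝ) (b : Fin s → ℝ) (hA : IsUnit A.det)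
    -- `Φ h'` is the one-step map of the Runge–Kutta method applied to `Λq̇ = ∇H(q)`
    (Φ : ℝ → (Fin n → ℝ) → (Fin n → ℝ))
    (hΦ : ∀ (h' : ℝ) (x x' : Fin n → ℝ),
      (∃ Qs Qd : Fin s → (Fin n → ℝ),
        (∀ i, Λ *ᵥ Qd i = grad H (Qs i)) ∧
        (∀ i, Qs i = x + h' • ∑ j, A i j • Qd j) ∧
        x' = x + h' • ∑ j, b j • Qd j) → x' = Φ h' x)
    (U : Set (Fin n → ℝ)) (hU : IsOpen U)
    (r : ℕ) (C : ℝ) (T : ℝ) (hT : 0 < T)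
    -- the exact flow of the ODE `Λq̇ = ∇H(q)`
    (qE : (Fin n → ℝ) → ℝ → (Fin n → ℝ))
    (hqE0 : ∀ x, qE x 0 = x)
    (hqEdiff : ∀ x, Differentiable ℝ (qE x))
    (hqEode : ∀ x t, Λ *ᵥ deriv (qE x) t = grad H (qE x t))
    -- classical convergence of order `r` for the ODE
    (hconv : ∀ x ∈ U, ∀ K : ℕ, 0 < K →
      ‖(fun y => Φ (T / (K:ℝ)) y)^[K] x - qE x T‖ ≤ C * (T / (K:ℝ)) ^ (r + 1)) :
    ∀ x ∈ U, ∀ K : ℕ, 0 < K →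
      ∀ qk pk : ℕ → (Fin n → ℝ),
        qk 0 = x →
        pk 0 = -(((1:ℝ)/2) • (Λ *ᵥ x)) →
        -- `(q_k, p_k)` is a numerical solution of the RK scheme for the DAE
        (∀ k < K, ∃ Qs Qd P Pd : Fin s → (Fin n → ℝ),
          (∀ i, P i = -(((1:ℝ)/2) • (Λ *ᵥ Qs i))) ∧
          (∀ i, Pd i = ((1:ℝ)/2) • (Λ *ᵥ Qd i) - grad H (Qs i)) ∧
          (∀ i, Qs i = qk k + (T / (K:ℝ)) • ∑ j, A i j • Qd j) ∧
          (∀ i, P i = pk k + (T / (K:ℝ)) • ∑ j, A i j • Pd j) ∧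
          qk (k+1) = qk k + (T / (K:ℝ)) • ∑ j, b j • Qd j ∧
          pk (k+1) = pk k + (T / (K:ℝ)) • ∑ j, b j • Pd j) →
        ‖qk K - qE x T‖ ≤ C * (T / (K:ℝ)) ^ (r + 1) ∧
        ‖pk K - (-(((1:ℝ)/2) • (Λ *ᵥ qE x T)))‖
          ≤ (1/2) * opNorm Λ * C * (T / (K:ℝ)) ^ (r + 1) := by
  intro x hx K hK qk pk hq0 hp0 hstep
  set h := T / (K:ℝ) with hh_def
  have hh : 0 < h := div_pos hT (by exact_mod_cast hK)
  have main : ∀ k, k ≤ K →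
      qk k = (fun y => Φ h y)^[k] x ∧ pk k = -(((1:ℝ)/2) • (Λ *ᵥ qk k)) := by
    intro k
    induction k with
    | zero =>
      intro _
      refine ⟨by simpa using hq0, ?_⟩
      rw [hq0, hp0]
    | succ k ih =>
      intro hk1
      have hkK : k < K := hk1
      obtain ⟨hqk, hpk⟩ := ih (le_of_lt hkK)
      obtain ⟨Qs, Qd, P, Pd, hP, hPd, hQs, hPsum, hqnext, hpnext⟩ := hstep k hkK
      -- the stage derivatives satisfy the ODE relation
      have hODE : ∀ j, Λ *ᵥ Qd j = grad H (Qs j) := by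
        have hEi : ∀ i, ∑ j, A i j • (Λ *ᵥ Qd j - grad H (Qs j)) = (0 : Fin n → ℝ) := by
          intro i
          set Su := ∑ j, A i j • (Λ *ᵥ Qd j) with hSu
          set Sg := ∑ j, A i j • grad H (Qs j) with hSg
          have e1 : -(((1:ℝ)/2) • (Λ *ᵥ Qs i)) = pk k + h • ∑ j, A i j • Pd j := by
            rw [← hP i, hPsum i]
          have expand : ∑ j, A i j • Pd j = ((1:ℝ)/2) • Su - Sg := by
            rw [hSu, hSg, Finset.smul_sum, ← Finset.sum_sub_distrib]
            refine Finset.sum_congr rfl fun j _ => ?_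
            rw [hPd j, smul_sub, smul_comm]
          have lhs : Λ *ᵥ Qs i = Λ *ᵥ qk k + h • Su := by
            rw [hQs i, Matrix.mulVec_add, Matrix.mulVec_smul, mulVec_sum_smul]
          have e2 : -(((1:ℝ)/2) • (Λ *ᵥ qk k + h • Su))
              = -(((1:ℝ)/2) • (Λ *ᵥ qk k)) + h • (((1:ℝ)/2) • Su - Sg) := by
            rw [← lhs, ← hpk, ← expand]; exact e1
          have e3 : h • Su - h • Sg = 0 := by
            have : h • Su - h • Sg =
                -((-(((1:ℝ)/2) • (Λ *ᵥ qk k + h • Su))) -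
                  ((-(((1:ℝ)/2) • (Λ *ᵥ qk k))) + h • (((1:ℝ)/2) • Su - Sg))) := by
              module
            rw [this, e2, sub_self, neg_zero]
          have e4 : Su = Sg := by
            have := sub_eq_zero.mp e3
            exact smul_right_injective (Fin n → ℝ) (ne_of_gt hh) this
          rw [show (∑ j, A i j • (Λ *ᵥ Qd j - grad H (Qs j))) = Su - Sg by
            rw [hSu, hSg, ← Finset.sum_sub_distrib]
            exact Finset.sum_congr rfl fun j _ => smul_sub _ _ _]
          rw [e4, sub_self]
        intro j
        funext μ
        have hAv : ∀ i, (A *ᵥ (fun j => (Λ *ᵥ Qd j) μ - grad H (Qs j) μ)) i = 0 := by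
          intro i
          have := congrFun (hEi i) μ
          simpa [Matrix.mulVec, dotProduct, Finset.sum_apply, Pi.smul_apply,
            Pi.sub_apply, smul_eq_mul, mul_sub] using this
        have hz : A *ᵥ (fun j => (Λ *ᵥ Qd j) μ - grad H (Qs j) μ) = 0 := funext hAv
        have : (fun j => (Λ *ᵥ Qd j) μ - grad H (Qs j) μ) = 0 := by
          have h1 := congrArg (fun v => A⁻¹ *ᵥ v) hz
          simpa [Matrix.mulVec_mulVec, Matrix.nonsing_inv_mul A hA, Matrix.one_mulVec,
            Matrix.mulVec_zero] using h1
        have := congrFun this j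
        simpa [sub_eq_zero] using this
      -- q step agrees with the ODE one-step map
      have hq1 : qk (k+1) = Φ h (qk k) :=
        hΦ h (qk k) (qk (k+1)) ⟨Qs, Qd, hODE, hQs, hqnext⟩
      constructor
      · rw [Function.iterate_succ_apply', ← hqk, ← hq1]
      · -- p stays on the constraint manifold
        have hPd' : ∀ j, Pd j = -(((1:ℝ)/2) • (Λ *ᵥ Qd j)) := by
          intro j
          rw [hPd j, ← hODE j]
          module
        have hsum : ∑ j, b j • Pd j = -(((1:ℝ)/2) • ∑ j, b j • (Λ *ᵥ Qd j)) := by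
          calc ∑ j, b j • Pd j = ∑ j, -(((1:ℝ)/2) • (b j • (Λ *ᵥ Qd j))) :=
                Finset.sum_congr rfl fun j _ => by rw [hPd' j]; module
            _ = -(((1:ℝ)/2) • ∑ j, b j • (Λ *ᵥ Qd j)) := by
                rw [Finset.sum_neg_distrib, ← Finset.smul_sum]
        rw [hpnext, hqnext, hpk, hsum, Matrix.mulVec_add, Matrix.mulVec_smul, mulVec_sum_smul]
        module
  obtain ⟨hqK, hpK⟩ := main K le_rfl
  have hb := hconv x hx K hK
  rw [hpK, hqK]
  refine ⟨hb, ?_⟩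
  set y := (fun y => Φ h y)^[K] x with hy
  set z := qE x T with hz
  have hdiff : -(((1:ℝ)/2) • (Λ *ᵥ y)) - (-(((1:ℝ)/2) • (Λ *ᵥ z)))
      = -(((1:ℝ)/2) • (Λ *ᵥ (y - z))) := by
    rw [Matrix.mulVec_sub]; module
  rw [hdiff, norm_neg, norm_smul]
  have hop : ‖Λ *ᵥ (y - z)‖ ≤ opNorm Λ * ‖y - z‖ := by
    simpa [opNorm, Matrix.mulVecLin_apply] using
      (LinearMap.toContinuousLinearMap Λ.mulVecLin).le_opNorm (y - z)
  have h2 : (0:ℝ) ≤ opNorm Λ := norm_nonneg _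
  have h3 : ‖((1:ℝ)/2)‖ = (1:ℝ)/2 := by norm_num
  rw [h3]
  nlinarith [norm_nonneg (Λ *ᵥ (y - z)), norm_nonneg (y - z)]
end
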